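/- In the setting of Definition 4.1, with Q = [0,1]^{2n}, r ∈ (0,1/2), disjoint sub-cubes Q_j = τ_{(z_j,0)}(δ_r(Q)), and h: ∪Q_j → ℝ given on Q_j by h(w) = -2∑_{i=1}^n (z_{j,i}w_{i+n} - z_{j,i+n}w_i), the operator T(f) = L(f̃ + h), where f̃(w) = r²f((w - z_j)/r) on Q_j and L is a norm-preserving linear extension operator from C(∪Q_j) to C(Q), is a contraction on C(Q) with Lipschitz constant at most r² < 1; hence T has a unique fixed point φ ∈ C(Q) satisfying φ(w) = r²φ((w-z_j)/r) - 2∑_{i=1}^n (z_{j,i}w_{i+n} - z_{j,i+n}w_i) for w ∈ Q_j. -/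

import Mathlib

open Filter Topology
open scoped BigOperators

noncomputable section

/-- The unit cube `Q = [0,1]^{2n} ⊂ ℝ^{2n}`; coordinates are indexed by `Fin n ⊕ Fin n`,
`Sum.inl i` standing for coordinate `i ≤ n` and `Sum.inr i` for coordinate `n + i`. -/
def Qcube (n : ℕ) : Set (Fin n ⊕ Fin n → ℝ) := {w | ∀ i, w i ∈ Set.Icc (0 : ℝ) 1}

/-- The `2^{2n}` corner points `z_j`, with coordinates in `{0, 1-r}`, indexed by boolean
functions `b`. -/
def zpt {n : ℕ} (r : ℝ) (b : Fin n ⊕ Fin n → Bool) : Fin n ⊕ Fin n → ℝ :=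
  fun i => if b i then 1 - r else 0

/-- The sub-cube `Q_j = z_j + rQ`. -/
def Qj {n : ℕ} (r : ℝ) (b : Fin n ⊕ Fin n → Bool) : Set (Fin n ⊕ Fin n → ℝ) :=
  (fun w => zpt r b + r • w) '' Qcube n

/-- `B = ∪_j Q_j`. -/
def Bset (n : ℕ) (r : ℝ) : Set (Fin n ⊕ Fin n → ℝ) := ⋃ b, Qj r b

/-- The affine function `h` on the cube `Q_j`:
`h(w) = -2 ∑_{i=1}^n (z_{j,i} w_{n+i} - z_{j,n+i} w_i)`. -/
def hfun {n : ℕ} (r : ℝ) (b : Fin n ⊕ Fin n → Bool) (w : Fin n ⊕ Fin n → ℝ) : ℝ :=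
  -2 * ∑ i : Fin n, (zpt r b (Sum.inl i) * w (Sum.inr i) - zpt r b (Sum.inr i) * w (Sum.inl i))

/-- The sup norm of `|f|` over a set. -/
def supOn {n : ℕ} (f : (Fin n ⊕ Fin n → ℝ) → ℝ) (S : Set (Fin n ⊕ Fin n → ℝ)) : ℝ :=
  sSup ((fun x => |f x|) '' S)

/-! `L` preserves the sup norm and `f̃ - g̃` is `r² (f - g)` transplanted to each sub-cube `Q_j`,
which the rescaling maps onto `Q`; hence `‖T f - T g‖ = r² ‖f - g‖` exactly. So `T` is a
contraction of the Banach space `C(Q)` and has a unique fixed point `φ`. Since `L` is the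
identity on `B = ⋃ Q_j`, the equation `T φ = φ` read on `Q_j` is the self-similarity relation. -/

open scoped NNReal Pointwise

section FixedPoint

variable {α : Type*} [TopologicalSpace α] {Q : Set α}

theorem exists_unique_fixedPoint_of_contractingOn (hQ : IsCompact Q) {K : ℝ≥0} (hK : K < 1)
    (T : (α → ℝ) → α → ℝ) (hT_cont : ∀ f, ContinuousOn f Q → ContinuousOn (T f) Q)
    (hT_lip : ∀ f g, ContinuousOn f Q → ContinuousOn g Q → ∀ c, 0 ≤ c →
      (∀ y ∈ Q, |f y - g y| ≤ c) → ∀ x ∈ Q, |T f x - T g x| ≤ K * c) :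
    ∃ φ, ContinuousOn φ Q ∧ (∀ x ∈ Q, T φ x = φ x) ∧
      ∀ ψ, ContinuousOn ψ Q → (∀ x ∈ Q, T ψ x = ψ x) → ∀ x ∈ Q, ψ x = φ x := by
  have := isCompact_iff_compactSpace.mp hQ
  -- Values off `Q` do not matter: `hT_lip` with `c = 0` says `T f` on `Q` only sees `f` on `Q`.
  let ext (u : C(Q, ℝ)) : α → ℝ := Function.extend Subtype.val u 0
  have ext_apply (u : C(Q, ℝ)) (x : Q) : ext u x = u x :=
    Subtype.val_injective.extend_apply _ _ _
  have ext_cont (u : C(Q, ℝ)) : ContinuousOn (ext u) Q := by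
    rw [continuousOn_iff_continuous_domRestrict]
    convert u.continuous using 1
    exact funext (ext_apply u)
  let Θ (u : C(Q, ℝ)) : C(Q, ℝ) :=
    ⟨Q.domRestrict (T (ext u)), (hT_cont _ (ext_cont u)).domRestrict⟩
  have hΘ : ContractingWith K Θ := by
    refine ⟨hK, LipschitzWith.of_dist_le_mul fun u v => ?_⟩
    refine (ContinuousMap.dist_le (by positivity)).2 fun x => ?_
    refine hT_lip _ _ (ext_cont u) (ext_cont v) _ dist_nonneg (fun y hy => ?_) _ x.2
    rw [ext_apply u ⟨y, hy⟩, ext_apply v ⟨y, hy⟩, ← Real.dist_eq]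
    exact ContinuousMap.dist_apply_le_dist _
  have T_congr (f g : α → ℝ) (hf : ContinuousOn f Q) (hg : ContinuousOn g Q)
      (hfg : Set.EqOn f g Q) : Set.EqOn (T f) (T g) Q := fun x hx => by
    have := hT_lip f g hf hg 0 le_rfl (fun y hy => by simp [hfg hy]) x hx
    rwa [mul_zero, abs_nonpos_iff, sub_eq_zero] at this
  have fixed_of_fixedOn (ψ : α → ℝ) (hψ : ContinuousOn ψ Q) (hfix : ∀ x ∈ Q, T ψ x = ψ x) :
      Function.IsFixedPt Θ ⟨Q.domRestrict ψ, hψ.domRestrict⟩ := by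
    ext x
    refine (T_congr _ _ (ext_cont _) hψ (fun y hy => ?_) x.2).trans (hfix x x.2)
    exact ext_apply _ ⟨y, hy⟩
  set φ := ContractingWith.fixedPoint Θ hΘ
  refine ⟨ext φ, ext_cont φ, fun x hx => ?_, fun ψ hψ hfix x hx => ?_⟩
  · exact (DFunLike.congr_fun hΘ.fixedPoint_isFixedPt ⟨x, hx⟩).trans (ext_apply φ ⟨x, hx⟩).symm
  · exact (DFunLike.congr_fun (hΘ.fixedPoint_unique (fixed_of_fixedOn ψ hψ hfix)) ⟨x, hx⟩).trans
      (ext_apply φ ⟨x, hx⟩).symm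

end FixedPoint

section Cube

variable {n : ℕ} {r : ℝ}

theorem Qcube_eq_Icc : Qcube n = Set.Icc 0 1 := by
  ext w
  simp [Qcube, Pi.le_def, forall_and]

theorem isCompact_Qcube : IsCompact (Qcube n) :=
  Qcube_eq_Icc (n := n) ▸ isCompact_Icc

theorem Qj_subset_Qcube (hr0 : 0 ≤ r) (hr1 : r ≤ 1) (b : Fin n ⊕ Fin n → Bool) :
    Qj r b ⊆ Qcube n := by
  rintro _ ⟨v, hv, rfl⟩ i
  obtain ⟨hv0, hv1⟩ := hv i
  simp only [Pi.add_apply, Pi.smul_apply, smul_eq_mul, zpt, Set.mem_Icc]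
  split_ifs <;> constructor <;> nlinarith

theorem isClosed_Qj (r : ℝ) (b : Fin n ⊕ Fin n → Bool) : IsClosed (Qj r b) :=
  (isCompact_Qcube.image (continuous_const.add (continuous_const_smul r))).isClosed

theorem image_rescale_Qj (hr : r ≠ 0) (b : Fin n ⊕ Fin n → Bool) :
    (fun w => r⁻¹ • (w - zpt r b)) '' Qj r b = Qcube n := by
  rw [Qj, Set.image_image]
  simp [smul_smul, inv_mul_cancel₀ hr]

theorem continuousOn_Bset {F : (Fin n ⊕ Fin n → ℝ) → ℝ}
    (h : ∀ b, ContinuousOn F (Qj r b)) : ContinuousOn F (Bset n r) :=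
  (locallyFinite_of_finite _).continuousOn_iUnion (isClosed_Qj r) h

theorem continuous_hfun (r : ℝ) (b : Fin n ⊕ Fin n → Bool) : Continuous (hfun r b) := by
  unfold hfun
  fun_prop

end Cube

section SupOn

variable {n : ℕ} {F G : (Fin n ⊕ Fin n → ℝ) → ℝ} {S : Set (Fin n ⊕ Fin n → ℝ)}

theorem supOn_congr (h : Set.EqOn F G S) : supOn F S = supOn G S :=
  congrArg sSup (Set.image_congr fun x hx => by rw [h hx])

theorem abs_le_supOn (hS : IsCompact S) (hF : ContinuousOn F S) {x : Fin n ⊕ Fin n → ℝ}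
    (hx : x ∈ S) : |F x| ≤ supOn F S :=
  le_csSup (hS.bddAbove_image hF.abs) ⟨x, hx, rfl⟩

theorem supOn_le {c : ℝ} (hc : 0 ≤ c) (h : ∀ x ∈ S, |F x| ≤ c) : supOn F S ≤ c :=
  Real.sSup_le (by rintro _ ⟨x, hx, rfl⟩; exact h x hx) hc

/-- Every `Q_j` is rescaled onto `Q`, so the values of `|D|` on `B` are exactly `r²` times those
of `|u|` on `Q`; this holds even when they are unbounded and `sSup` takes its junk value. -/
theorem supOn_Bset_eq_of_eqOn_rescale {r : ℝ} (hr : r ≠ 0) {D u : (Fin n ⊕ Fin n → ℝ) → ℝ}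
    (h : ∀ b, ∀ w ∈ Qj r b, D w = r ^ 2 * u (r⁻¹ • (w - zpt r b))) :
    supOn D (Bset n r) = r ^ 2 * supOn u (Qcube n) := by
  have piece (b : Fin n ⊕ Fin n → Bool) :
      (fun x => |D x|) '' Qj r b = r ^ 2 • (fun x => |u x|) '' Qcube n := by
    rw [← image_rescale_Qj hr b, Set.image_image, ← Set.image_smul, Set.image_image]
    refine Set.image_congr fun w hw => ?_
    rw [h b w hw, abs_mul, abs_of_nonneg (sq_nonneg r), smul_eq_mul]
  rw [supOn, Bset, Set.image_iUnion, Set.iUnion_congr piece, Set.iUnion_const,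
    Real.sSup_smul_of_nonneg (sq_nonneg r), smul_eq_mul, supOn]

end SupOn

theorem map_sub_apply_of_map_add {M β G : Type*} [AddGroup M] [AddGroup G] {L : M → β → G}
    {S : Set β} (hadd : ∀ f g, ∀ x ∈ S, L (f + g) x = L f x + L g x) (f g : M) {x : β}
    (hx : x ∈ S) : L (f - g) x = L f x - L g x :=
  eq_sub_of_add_eq (by rw [← hadd _ _ x hx, sub_add_cancel])

section ExtensionOperator

variable {n : ℕ} {r : ℝ} (L : ((Fin n ⊕ Fin n → ℝ) → ℝ) → (Fin n ⊕ Fin n → ℝ) → ℝ)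
  (ftil : ((Fin n ⊕ Fin n → ℝ) → ℝ) → (Fin n ⊕ Fin n → ℝ) → ℝ) (hB : (Fin n ⊕ Fin n → ℝ) → ℝ)

theorem continuousOn_ftil_add (hr : r ≠ 0)
    (hftil : ∀ f b, ∀ w ∈ Qj r b, ftil f w = r ^ 2 * f (r⁻¹ • (w - zpt r b)))
    (hhB : ∀ b, ∀ w ∈ Qj r b, hB w = hfun r b w) {f : (Fin n ⊕ Fin n → ℝ) → ℝ}
    (hf : ContinuousOn f (Qcube n)) : ContinuousOn (ftil f + hB) (Bset n r) := by
  refine continuousOn_Bset fun b => ContinuousOn.congr (f := fun w =>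
    r ^ 2 * f (r⁻¹ • (w - zpt r b)) + hfun r b w) ?_ fun w hw => ?_
  · have hrescale : Set.MapsTo (fun w => r⁻¹ • (w - zpt r b)) (Qj r b) (Qcube n) :=
      image_rescale_Qj hr b ▸ Set.mapsTo_image _ _
    exact (continuousOn_const.mul (hf.comp (by fun_prop) hrescale)).add
      (continuous_hfun r b).continuousOn
  · simp only [Pi.add_apply, hftil f b w hw, hhB b w hw]

theorem supOn_sub_extension_eq (hr : r ≠ 0)
    (hLadd : ∀ f g, ∀ x ∈ Qcube n, L (f + g) x = L f x + L g x)
    (hLnorm : ∀ f, supOn (L f) (Qcube n) = supOn f (Bset n r))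
    (hftil : ∀ f b, ∀ w ∈ Qj r b, ftil f w = r ^ 2 * f (r⁻¹ • (w - zpt r b)))
    (f g : (Fin n ⊕ Fin n → ℝ) → ℝ) :
    supOn (fun x => L (ftil f + hB) x - L (ftil g + hB) x) (Qcube n) =
      r ^ 2 * supOn (fun x => f x - g x) (Qcube n) :=
  calc _ = supOn (L (ftil f + hB - (ftil g + hB))) (Qcube n) :=
        supOn_congr fun x hx => (map_sub_apply_of_map_add hLadd _ _ hx).symm
    _ = supOn (ftil f + hB - (ftil g + hB)) (Bset n r) := hLnorm _
    _ = _ := supOn_Bset_eq_of_eqOn_rescale hr fun b w hw => by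
        simp only [Pi.sub_apply, Pi.add_apply, hftil f b w hw, hftil g b w hw]
        ring

end ExtensionOperator

theorem extension_operator_contraction_fixed_point_general (n : ℕ) (r : ℝ)
    (hr : r ∈ Set.Ioo (0 : ℝ) (1 / 2))
    (L : ((Fin n ⊕ Fin n → ℝ) → ℝ) → ((Fin n ⊕ Fin n → ℝ) → ℝ))
    (hLadd : ∀ f g : (Fin n ⊕ Fin n → ℝ) → ℝ, ∀ x ∈ Qcube n, L (f + g) x = L f x + L g x)
    (hLext : ∀ f : (Fin n ⊕ Fin n → ℝ) → ℝ, ∀ x ∈ Bset n r, L f x = f x)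
    (hLcont : ∀ f : (Fin n ⊕ Fin n → ℝ) → ℝ,
      ContinuousOn f (Bset n r) → ContinuousOn (L f) (Qcube n))
    (hLnorm : ∀ f : (Fin n ⊕ Fin n → ℝ) → ℝ, supOn (L f) (Qcube n) = supOn f (Bset n r))
    (ftil : ((Fin n ⊕ Fin n → ℝ) → ℝ) → ((Fin n ⊕ Fin n → ℝ) → ℝ))
    (hftil : ∀ (f : (Fin n ⊕ Fin n → ℝ) → ℝ) (b : Fin n ⊕ Fin n → Bool), ∀ w ∈ Qj r b,
      ftil f w = r ^ 2 * f (r⁻¹ • (w - zpt r b)))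
    (hB : (Fin n ⊕ Fin n → ℝ) → ℝ)
    (hhB : ∀ b : Fin n ⊕ Fin n → Bool, ∀ w ∈ Qj r b, hB w = hfun r b w) :
    r ^ 2 < 1 ∧
    (∀ f g : (Fin n ⊕ Fin n → ℝ) → ℝ,
      supOn (fun x => L (ftil f + hB) x - L (ftil g + hB) x) (Qcube n) ≤
        r ^ 2 * supOn (fun x => f x - g x) (Qcube n)) ∧
    (∃ φ : (Fin n ⊕ Fin n → ℝ) → ℝ, ContinuousOn φ (Qcube n) ∧
      (∀ x ∈ Qcube n, L (ftil φ + hB) x = φ x) ∧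
      (∀ b : Fin n ⊕ Fin n → Bool, ∀ w ∈ Qj r b,
        φ w = r ^ 2 * φ (r⁻¹ • (w - zpt r b)) + hfun r b w) ∧
      (∀ ψ : (Fin n ⊕ Fin n → ℝ) → ℝ, ContinuousOn ψ (Qcube n) →
        (∀ x ∈ Qcube n, L (ftil ψ + hB) x = ψ x) → ∀ x ∈ Qcube n, ψ x = φ x)) := by
  obtain ⟨hr0, hr1⟩ := hr
  have hr2 : r ^ 2 < 1 := by nlinarith
  have hcontr := supOn_sub_extension_eq L ftil hB hr0.ne' hLadd hLnorm hftil
  have hT_cont (f) (hf : ContinuousOn f (Qcube n)) : ContinuousOn (L (ftil f + hB)) (Qcube n) :=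
    hLcont _ (continuousOn_ftil_add ftil hB hr0.ne' hftil hhB hf)
  obtain ⟨φ, hφ_cont, hφ_fix, hφ_unique⟩ :=
    exists_unique_fixedPoint_of_contractingOn isCompact_Qcube (K := ⟨r ^ 2, sq_nonneg r⟩) hr2
      (fun f => L (ftil f + hB)) hT_cont fun f g hf hg c hc hfg x hx =>
        calc _ ≤ supOn (fun x => L (ftil f + hB) x - L (ftil g + hB) x) (Qcube n) :=
              abs_le_supOn isCompact_Qcube ((hT_cont f hf).sub (hT_cont g hg)) hx
          _ ≤ r ^ 2 * c := (hcontr f g).trans_le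
              (mul_le_mul_of_nonneg_left (supOn_le hc hfg) (sq_nonneg r))
  refine ⟨hr2, fun f g => (hcontr f g).le, φ, hφ_cont, hφ_fix, fun b w hw => ?_, hφ_unique⟩
  have hwQ : w ∈ Qcube n := Qj_subset_Qcube hr0.le (by linarith) b hw
  rw [← hφ_fix w hwQ, hLext _ w (Set.mem_iUnion.2 ⟨b, hw⟩), Pi.add_apply, hftil φ b w hw,
    hhB b w hw]

/-- with `L` a norm-preserving linear extension operator from `C(B)` to
`C(Q)`, `f̃` the rescaling `f̃(w) = r² f((w - z_j)/r)` on `Q_j`, and `h` as above, the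
operator `T(f) = L(f̃ + h)` is an `r²`-contraction (`r² < 1`) on `C(Q)` and has a unique
fixed point `φ` satisfying `φ(w) = r² φ((w - z_j)/r) - 2∑ (z_{j,i}w_{n+i} - z_{j,n+i}w_i)`
on each `Q_j`. -/
theorem extension_operator_contraction_fixed_point (n : ℕ) (r : ℝ)
    (hr : r ∈ Set.Ioo (0 : ℝ) (1 / 2))
    (L : ((Fin n ⊕ Fin n → ℝ) → ℝ) → ((Fin n ⊕ Fin n → ℝ) → ℝ))
    (hLadd : ∀ f g : (Fin n ⊕ Fin n → ℝ) → ℝ, ∀ x ∈ Qcube n, L (f + g) x = L f x + L g x)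
    (hLsmul : ∀ (c : ℝ) (f : (Fin n ⊕ Fin n → ℝ) → ℝ), ∀ x ∈ Qcube n, L (c • f) x = c * L f x)
    (hLext : ∀ f : (Fin n ⊕ Fin n → ℝ) → ℝ, ∀ x ∈ Bset n r, L f x = f x)
    (hLcont : ∀ f : (Fin n ⊕ Fin n → ℝ) → ℝ,
      ContinuousOn f (Bset n r) → ContinuousOn (L f) (Qcube n))
    (hLnorm : ∀ f : (Fin n ⊕ Fin n → ℝ) → ℝ, supOn (L f) (Qcube n) = supOn f (Bset n r))
    (ftil : ((Fin n ⊕ Fin n → ℝ) → ℝ) → ((Fin n ⊕ Fin n → ℝ) → ℝ))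
    (hftil : ∀ (f : (Fin n ⊕ Fin n → ℝ) → ℝ) (b : Fin n ⊕ Fin n → Bool), ∀ w ∈ Qj r b,
      ftil f w = r ^ 2 * f (r⁻¹ • (w - zpt r b)))
    (hB : (Fin n ⊕ Fin n → ℝ) → ℝ)
    (hhB : ∀ b : Fin n ⊕ Fin n → Bool, ∀ w ∈ Qj r b, hB w = hfun r b w) :
    r ^ 2 < 1 ∧
    (∀ f g : (Fin n ⊕ Fin n → ℝ) → ℝ,
      supOn (fun x => L (ftil f + hB) x - L (ftil g + hB) x) (Qcube n) ≤
        r ^ 2 * supOn (fun x => f x - g x) (Qcube n)) ∧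
    (∃ φ : (Fin n ⊕ Fin n → ℝ) → ℝ, ContinuousOn φ (Qcube n) ∧
      (∀ x ∈ Qcube n, L (ftil φ + hB) x = φ x) ∧
      (∀ b : Fin n ⊕ Fin n → Bool, ∀ w ∈ Qj r b,
        φ w = r ^ 2 * φ (r⁻¹ • (w - zpt r b)) + hfun r b w) ∧
      (∀ ψ : (Fin n ⊕ Fin n → ℝ) → ℝ, ContinuousOn ψ (Qcube n) →
        (∀ x ∈ Qcube n, L (ftil ψ + hB) x = ψ x) → ∀ x ∈ Qcube n, ψ x = φ x)) :=
  extension_operator_contraction_fixed_point_general n r hr L hLadd hLext hLcont hLnorm ftil hftil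
    hB hhB
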